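/- Let P_s be a sign pattern on n nodes and let Z ⊆ V be a positive signed zero forcing set of P_s. Then for every A ∈ Q_s(P_s) and every real λ > 0, the dimension of the left eigenspace {ν ∈ ℝ^n : ν^T A = λ ν^T} is at most |Z|. In particular, the maximum geometric multiplicity of a positive eigenvalue over all A ∈ Q_s(P_s) is at most the positive signed zero forcing number of P_s (the minimum cardinality of a positive signed zero forcing set). -/

import Mathlib

/-- An entry of a sign pattern: `+`, `-`, `0`, or `?` (unrestricted). -/
inductive SignPatEntry : Type
  | pos | neg | zero | unk
deriving DecidableEq

namespace SignPatEntry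

/-- Sign inversion: `inv(+) = -`, `inv(-) = +`. -/
def inv : SignPatEntry → SignPatEntry
  | pos => neg
  | neg => pos
  | zero => zero
  | unk => unk

/-- Product of signs (used as `s · P(u,v)`). -/
def mul : SignPatEntry → SignPatEntry → SignPatEntry
  | pos, y => y
  | neg, y => y.inv
  | zero, _ => zero
  | unk, _ => unk

end SignPatEntry

/-- A real number matches a sign-pattern entry. -/
def matchesSign : SignPatEntry → ℝ → Prop
  | .pos, a => 0 < a
  | .neg, a => a < 0
  | .zero, a => a = 0
  | .unk, _ => True

/-- The qualitative class of a sign pattern: real matrices whose entries have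
the prescribed signs. -/
def QClass {n : ℕ} (P : Fin n → Fin n → SignPatEntry)
    (A : Matrix (Fin n) (Fin n) ℝ) : Prop :=
  ∀ i j : Fin n, matchesSign (P i j) (A i j)

/-- A configuration of the signing-and-coloring game: a set of black nodes and a
partial marking of nodes with signs. -/
structure Config (n : ℕ) where
  black : Finset (Fin n)
  mark : Fin n → Option SignPatEntry

/-- The set of white out-neighbors of `v` (out-neighbors of `v` are the `u` with
`P u v ≠ 0`). -/
def Wset {n : ℕ} (P : Fin n → Fin n → SignPatEntry) (c : Config n) (v : Fin n) :
    Finset (Fin n) :=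
  Finset.univ.filter (fun u => u ∉ c.black ∧ P u v ≠ SignPatEntry.zero)

/-- One step of the signing and coloring rule, played on the pattern `P`. -/
inductive Step {n : ℕ} (P : Fin n → Fin n → SignPatEntry) : Config n → Config n → Prop
  /-- (1) a pivot node `v` with a single white out-neighbor `u` forces `u` black. -/
  | force1 (c : Config n) (v u : Fin n)
      (hv : v ∈ c.black ∨ P v v ≠ SignPatEntry.unk)
      (hW : Wset P c v = {u}) :
      Step P c ⟨insert u c.black, c.mark⟩
  /-- (2) if all white out-neighbors of a pivot `v` are marked consistently
  (all with `m(u) = P(u,v)` or all with `m(u) = -P(u,v)`), they all become black. -/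
  | force2 (c : Config n) (v : Fin n)
      (hv : v ∈ c.black ∨ P v v ≠ SignPatEntry.unk)
      (hall : (∀ u ∈ Wset P c v, c.mark u = some (P u v)) ∨
              (∀ u ∈ Wset P c v, c.mark u = some (P u v).inv)) :
      Step P c ⟨c.black ∪ Wset P c v, c.mark⟩
  /-- (3) if exactly one white out-neighbor `w` of a pivot `v` is unmarked, at least one
  is marked, and every marked one satisfies `m(u) = s · P(u,v)`, then `w` gets
  marked with `-s · P(w,v)`. -/
  | force3 (c : Config n) (v w : Fin n) (s : SignPatEntry)
      (hv : v ∈ c.black ∨ P v v ≠ SignPatEntry.unk)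
      (hs : s = SignPatEntry.pos ∨ s = SignPatEntry.neg)
      (hw : w ∈ Wset P c v) (hwnone : c.mark w = none)
      (hmarked : ∀ u ∈ Wset P c v, u ≠ w → c.mark u = some (s.mul (P u v)))
      (hex : ∃ u ∈ Wset P c v, u ≠ w) :
      Step P c ⟨c.black, Function.update c.mark w (some (s.inv.mul (P w v)))⟩
  /-- (4) if no white node is marked, an arbitrary white node may be marked `+`. -/
  | force4 (c : Config n) (u : Fin n)
      (hnomark : ∀ x : Fin n, x ∉ c.black → c.mark x = none)
      (hu : u ∉ c.black) :
      Step P c ⟨c.black, Function.update c.mark u (some SignPatEntry.pos)⟩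

/-- The initial configuration: black set `Z`, no marks. -/
def initConfig {n : ℕ} (Z : Finset (Fin n)) : Config n := ⟨Z, fun _ => none⟩

/-- `Z` is a signed zero forcing set of the pattern `P`. -/
def SignedZFS {n : ℕ} (P : Fin n → Fin n → SignPatEntry) (Z : Finset (Fin n)) : Prop :=
  ∃ c : Config n, Relation.ReflTransGen (Step P) (initConfig Z) c ∧ c.black = Finset.univ

/-- The negative looped pattern `P⁻`: off-diagonal as `P`; diagonal `-` if
`P i i ∈ {0,-}`, and `?` if `P i i ∈ {+,?}`. -/
def negLooped {n : ℕ} (P : Fin n → Fin n → SignPatEntry) :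
    Fin n → Fin n → SignPatEntry := fun i j =>
  if i = j then
    (match P i i with
      | SignPatEntry.zero => SignPatEntry.neg
      | SignPatEntry.neg => SignPatEntry.neg
      | _ => SignPatEntry.unk)
  else P i j

/-- The positive looped pattern `P⁺`: off-diagonal as `P`; diagonal `+` if
`P i i ∈ {0,+}`, and `?` if `P i i ∈ {-,?}`. -/
def posLooped {n : ℕ} (P : Fin n → Fin n → SignPatEntry) :
    Fin n → Fin n → SignPatEntry := fun i j =>
  if i = j then
    (match P i i with
      | SignPatEntry.zero => SignPatEntry.pos
      | SignPatEntry.pos => SignPatEntry.pos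
      | _ => SignPatEntry.unk)
  else P i j

/-- The sign of a real number, as a sign-pattern entry. -/
noncomputable def sgnR (x : ℝ) : SignPatEntry :=
  if 0 < x then SignPatEntry.pos else if x < 0 then SignPatEntry.neg else SignPatEntry.zero

/-- The left eigenspace `{ν | νᵀ A = λ νᵀ}` as a submodule of `ℝⁿ`. -/
def leftEigenspace {n : ℕ} (A : Matrix (Fin n) (Fin n) ℝ) (lam : ℝ) :
    Submodule ℝ (Fin n → ℝ) where
  carrier := {ν | Matrix.vecMul ν A = lam • ν}
  zero_mem' := by simp [Matrix.zero_vecMul]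
  add_mem' := by
    intro a b ha hb
    simp only [Set.mem_setOf_eq] at *
    rw [Matrix.add_vecMul, ha, hb, smul_add]
  smul_mem' := by
    intro c a ha
    simp only [Set.mem_setOf_eq] at *
    rw [Matrix.smul_vecMul, ha, smul_comm]

/-!
If `νᵀ A = λ νᵀ` with `λ > 0`, then `ν` is a left null vector of `B = A - λ I`, and `B` lies in
the qualitative class of the negative looped pattern `P⁻` (the diagonal shift by `-λ` keeps
negative and zero diagonal entries negative). Along any play of the signing-and-coloring game
on `P⁻` starting from `Z`, the following stays true provided `ν` vanishes on `Z`: `ν` vanishes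
on black nodes, and for a fixed nonzero `ε` every mark weakly records the sign of `ε ν`. Each
rule is justified by the column equation `∑_{u white} ν u B u v = 0` at the pivot `v`, all of
whose terms have a known weak sign. A play ending all black forces `ν = 0`, so restriction to
`Z` is injective on the eigenspace.
-/

namespace SignPatEntry

def toReal : SignPatEntry → ℝ
  | pos => 1
  | neg => -1
  | zero => 0
  | unk => 0

end SignPatEntry

open SignPatEntry
open scoped Matrix

/-- Marks are only ever `+` or `-`; making `0` and `?` unsatisfiable lets a satisfied mark
certify a genuine sign. -/
def WeakSign : SignPatEntry → ℝ → Prop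
  | pos, x => 0 ≤ x
  | neg, x => x ≤ 0
  | zero, _ => False
  | unk, _ => False

lemma weakSign_mul_iff {s : SignPatEntry} (hs : s = pos ∨ s = neg) (p : SignPatEntry) (x : ℝ) :
    WeakSign (s.mul p) x ↔ WeakSign p (s.toReal * x) := by
  rcases hs with rfl | rfl <;> cases p <;> simp [WeakSign, mul, inv, toReal]

lemma matchesSign_ne_zero {p : SignPatEntry} {b : ℝ} (h : matchesSign p b) (hp0 : p ≠ zero)
    (hpu : p ≠ unk) : b ≠ 0 := by
  cases p <;> simp_all [matchesSign] <;> linarith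

lemma WeakSign.mul_nonneg {p : SignPatEntry} {x b : ℝ} (hx : WeakSign p x)
    (hb : matchesSign p b) : 0 ≤ x * b := by
  cases p
  · exact _root_.mul_nonneg hx (le_of_lt hb)
  · exact mul_nonneg_of_nonpos_of_nonpos hx (le_of_lt hb)
  · exact hx.elim
  · exact hx.elim

lemma weakSign_of_mul_nonneg {p : SignPatEntry} {x b : ℝ} (hb : matchesSign p b)
    (hp0 : p ≠ zero) (hpu : p ≠ unk) (h : 0 ≤ x * b) : WeakSign p x := by
  cases p
  · exact nonneg_of_mul_nonneg_left h hb
  · exact nonpos_of_mul_nonneg_left h hb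
  · exact absurd rfl hp0
  · exact absurd rfl hpu

lemma eq_zero_of_sum_mul_eq_zero {ι : Type*} {s : Finset ι} {p : ι → SignPatEntry}
    {x b : ι → ℝ} (hsum : ∑ u ∈ s, x u * b u = 0) (hx : ∀ u ∈ s, WeakSign (p u) (x u))
    (hb : ∀ u ∈ s, matchesSign (p u) (b u)) : ∀ u ∈ s, x u = 0 := by
  intro u hu
  have hterm := (Finset.sum_eq_zero_iff_of_nonneg fun u hu => (hx u hu).mul_nonneg (hb u hu)).1
    hsum u hu
  have hp : p u ≠ zero ∧ p u ≠ unk := by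
    have := hx u hu
    constructor <;> rintro h <;> simp [h, WeakSign] at this
  exact (mul_eq_zero.1 hterm).resolve_right (matchesSign_ne_zero (hb u hu) hp.1 hp.2)

lemma weakSign_neg_of_sum_mul_eq_zero {ι : Type*} [DecidableEq ι] {s : Finset ι}
    {p : ι → SignPatEntry} {x b : ι → ℝ} {w : ι} (hw : w ∈ s)
    (hsum : ∑ u ∈ s, x u * b u = 0) (hx : ∀ u ∈ s, u ≠ w → WeakSign (p u) (x u))
    (hb : ∀ u ∈ s, matchesSign (p u) (b u)) (hw0 : p w ≠ zero) (hwu : p w ≠ unk) :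
    WeakSign (p w) (-x w) := by
  have hrest : 0 ≤ ∑ u ∈ s.erase w, x u * b u := Finset.sum_nonneg fun u hu =>
    (hx u (Finset.mem_of_mem_erase hu) (Finset.ne_of_mem_erase hu)).mul_nonneg
      (hb u (Finset.mem_of_mem_erase hu))
  rw [← Finset.sum_erase_add _ _ hw] at hsum
  exact weakSign_of_mul_nonneg (hb w hw) hw0 hwu (by linarith)

def SignConsistent {n : ℕ} (ν : Fin n → ℝ) (c : Config n) : Prop :=
  (∀ i ∈ c.black, ν i = 0) ∧
    ∃ ε : ℝ, ε ≠ 0 ∧ ∀ u m, c.mark u = some m → WeakSign m (ε * ν u)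

section Game

variable {n : ℕ} {P : Fin n → Fin n → SignPatEntry} {B : Matrix (Fin n) (Fin n) ℝ}
  {ν : Fin n → ℝ} {c : Config n}

lemma mem_Wset {v u : Fin n} : u ∈ Wset P c v ↔ u ∉ c.black ∧ P u v ≠ zero := by
  simp [Wset]

lemma Wset_ne_unk (hP : ∀ i j, i ≠ j → P i j ≠ unk) {v u : Fin n}
    (hv : v ∈ c.black ∨ P v v ≠ unk) (hu : u ∈ Wset P c v) : P u v ≠ unk := by
  by_cases huv : u = v
  · subst huv
    exact hv.resolve_left (mem_Wset.1 hu).1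
  · exact hP u v huv

lemma sum_Wset_mul_eq_zero (hB : QClass P B) (hν : ν ᵥ* B = 0)
    (hblack : ∀ i ∈ c.black, ν i = 0) (v : Fin n) :
    ∑ u ∈ Wset P c v, ν u * B u v = 0 := by
  rw [Finset.sum_subset (Finset.subset_univ _)]
  · simpa [Matrix.vecMul, dotProduct] using congrFun hν v
  · intro u _ hu
    by_cases hb : u ∈ c.black
    · simp [hblack u hb]
    · have hz : P u v = zero := by simpa [mem_Wset, hb] using hu
      have := hB u v
      simp_all [matchesSign]

variable (hP : ∀ i j, i ≠ j → P i j ≠ unk) (hB : QClass P B) (hν : ν ᵥ* B = 0)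
include hP hB hν

lemma SignConsistent.force1 {v u : Fin n} (hv : v ∈ c.black ∨ P v v ≠ unk)
    (hW : Wset P c v = {u}) (hc : SignConsistent ν c) :
    SignConsistent ν ⟨insert u c.black, c.mark⟩ := by
  obtain ⟨hblack, hmark⟩ := hc
  have hu : u ∈ Wset P c v := by simp [hW]
  have hsum := sum_Wset_mul_eq_zero hB hν hblack v
  rw [hW, Finset.sum_singleton] at hsum
  have hBu : B u v ≠ 0 :=
    matchesSign_ne_zero (hB u v) (mem_Wset.1 hu).2 (Wset_ne_unk hP hv hu)
  refine ⟨fun i hi => ?_, hmark⟩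
  rcases Finset.mem_insert.1 hi with rfl | hi
  · exact (mul_eq_zero.1 hsum).resolve_right hBu
  · exact hblack i hi

omit hP in
lemma SignConsistent.force2 {v : Fin n}
    (hall : (∀ u ∈ Wset P c v, c.mark u = some (P u v)) ∨
      (∀ u ∈ Wset P c v, c.mark u = some (P u v).inv))
    (hc : SignConsistent ν c) :
    SignConsistent ν ⟨c.black ∪ Wset P c v, c.mark⟩ := by
  obtain ⟨hblack, ε, hε, hmark⟩ := hc
  obtain ⟨s, hs, hall⟩ : ∃ s, (s = pos ∨ s = neg) ∧
      ∀ u ∈ Wset P c v, c.mark u = some (s.mul (P u v)) :=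
    hall.elim (fun h => ⟨pos, Or.inl rfl, h⟩) (fun h => ⟨neg, Or.inr rfl, h⟩)
  have hsum : ∑ u ∈ Wset P c v, (s.toReal * ε * ν u) * B u v = 0 := by
    simp_rw [mul_assoc, ← Finset.mul_sum, sum_Wset_mul_eq_zero hB hν hblack v, mul_zero]
  have hzero := eq_zero_of_sum_mul_eq_zero hsum
    (fun u hu => by rw [mul_assoc, ← weakSign_mul_iff hs]; exact hmark u _ (hall u hu))
    (fun u _ => hB u v)
  have hsε : s.toReal * ε ≠ 0 := mul_ne_zero (by rcases hs with rfl | rfl <;> norm_num [toReal]) hε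
  refine ⟨fun i hi => ?_, ε, hε, hmark⟩
  rcases Finset.mem_union.1 hi with hi | hi
  · exact hblack i hi
  · exact (mul_eq_zero.1 (hzero i hi)).resolve_left hsε

lemma SignConsistent.force3 {v w : Fin n} {s : SignPatEntry} (hv : v ∈ c.black ∨ P v v ≠ unk)
    (hs : s = pos ∨ s = neg) (hw : w ∈ Wset P c v)
    (hmarked : ∀ u ∈ Wset P c v, u ≠ w → c.mark u = some (s.mul (P u v)))
    (hc : SignConsistent ν c) :
    SignConsistent ν ⟨c.black, Function.update c.mark w (some (s.inv.mul (P w v)))⟩ := by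
  obtain ⟨hblack, ε, hε, hmark⟩ := hc
  have hsum : ∑ u ∈ Wset P c v, (s.toReal * ε * ν u) * B u v = 0 := by
    simp_rw [mul_assoc, ← Finset.mul_sum, sum_Wset_mul_eq_zero hB hν hblack v, mul_zero]
  have hnew := weakSign_neg_of_sum_mul_eq_zero hw hsum
    (fun u hu huw => by rw [mul_assoc, ← weakSign_mul_iff hs]; exact hmark u _ (hmarked u hu huw))
    (fun u _ => hB u v) (mem_Wset.1 hw).2 (Wset_ne_unk hP hv hw)
  have hsinv : s.inv = pos ∨ s.inv = neg := by rcases hs with rfl | rfl <;> simp [inv]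
  have htoReal : s.inv.toReal = -s.toReal := by rcases hs with rfl | rfl <;> simp [inv, toReal]
  refine ⟨hblack, ε, hε, fun u m hm => ?_⟩
  dsimp only at hm
  by_cases huw : u = w
  · subst huw
    rw [Function.update_self, Option.some.injEq] at hm
    rw [← hm, weakSign_mul_iff hsinv, htoReal]
    convert hnew using 1
    ring
  · exact hmark u m (by rwa [Function.update_of_ne huw] at hm)

omit hP hB hν in
lemma SignConsistent.force4 {u : Fin n} (hnomark : ∀ x, x ∉ c.black → c.mark x = none)
    (hc : SignConsistent ν c) :
    SignConsistent ν ⟨c.black, Function.update c.mark u (some pos)⟩ := by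
  obtain ⟨hblack, ε, -, hmark⟩ := hc
  refine ⟨hblack, if 0 ≤ ν u then 1 else -1, by split_ifs <;> norm_num, fun x m hm => ?_⟩
  dsimp only at hm
  by_cases hxu : x = u
  · subst hxu
    rw [Function.update_self, Option.some.injEq] at hm
    subst hm
    split_ifs with h <;> simp only [WeakSign] <;> linarith
  · rw [Function.update_of_ne hxu] at hm
    by_cases hxb : x ∈ c.black
    · have := hmark x m hm
      rwa [hblack x hxb, mul_zero] at this ⊢
    · simp [hnomark x hxb] at hm

lemma SignConsistent.step {c' : Config n} (hstep : Step P c c') (hc : SignConsistent ν c) :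
    SignConsistent ν c' := by
  cases hstep with
  | force1 v u hv hW => exact hc.force1 hP hB hν hv hW
  | force2 v _ hall => exact hc.force2 hB hν hall
  | force3 v w s hv hs hw _ hmarked _ => exact hc.force3 hP hB hν hv hs hw hmarked
  | force4 u hnomark _ => exact hc.force4 hnomark

theorem SignedZFS.eq_zero_of_vecMul_eq_zero {Z : Finset (Fin n)} (hZ : SignedZFS P Z)
    (hνZ : ∀ i ∈ Z, ν i = 0) : ν = 0 := by
  obtain ⟨c, hplay, hall⟩ := hZ
  have hc : SignConsistent ν c := by
    clear hall
    induction hplay with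
    | refl => exact ⟨hνZ, 1, one_ne_zero, fun u m hm => by cases hm⟩
    | tail _ hstep ih => exact ih.step hP hB hν hstep
  exact funext fun i => hc.1 i (hall ▸ Finset.mem_univ i)

end Game

lemma finrank_le_card_of_forall_eq_zero {K ι : Type*} [Field K] [Fintype ι]
    (E : Submodule K (ι → K)) (Z : Finset ι) (h : ∀ ν ∈ E, (∀ i ∈ Z, ν i = 0) → ν = 0) :
    Module.finrank K E ≤ Z.card := by
  let restrict : E →ₗ[K] (Z → K) :=
    (LinearMap.funLeft K K (Subtype.val : Z → ι)).comp E.subtype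
  have hinj : Function.Injective restrict := by
    rw [← LinearMap.ker_eq_bot, Submodule.eq_bot_iff]
    intro ν hν
    refine Subtype.ext (h ν ν.2 fun i hi => ?_)
    simpa [restrict, LinearMap.funLeft] using congrFun (LinearMap.mem_ker.1 hν) ⟨i, hi⟩
  simpa using LinearMap.finrank_le_finrank_of_injective hinj

lemma qClass_negLooped_sub_smul_one {n : ℕ} {P : Fin n → Fin n → SignPatEntry}
    {A : Matrix (Fin n) (Fin n) ℝ} (hA : QClass P A) {lam : ℝ} (hlam : 0 < lam) :
    QClass (negLooped P) (A - lam • 1) := by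
  intro i j
  by_cases hij : i = j
  · subst hij
    have hAii := hA i i
    cases hPi : P i i <;> simp_all [negLooped, matchesSign]
    linarith
  · simpa [negLooped, hij, Matrix.one_apply_ne hij] using hA i j

lemma negLooped_ne_unk {n : ℕ} {P : Fin n → Fin n → SignPatEntry}
    (hP : ∀ i j, i ≠ j → P i j ≠ unk) (i j : Fin n) (hij : i ≠ j) : negLooped P i j ≠ unk := by
  simpa [negLooped, hij] using hP i j hij

lemma vecMul_sub_smul_one_eq_zero {n : ℕ} {A : Matrix (Fin n) (Fin n) ℝ} {lam : ℝ}
    {ν : Fin n → ℝ} (hν : ν ∈ leftEigenspace A lam) : ν ᵥ* (A - lam • 1) = 0 := by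
  have : ν ᵥ* A = lam • ν := hν
  rw [Matrix.vecMul_sub, Matrix.vecMul_smul, Matrix.vecMul_one, this, sub_self]

/-- If `Z` is a positive signed zero forcing set of `P_s` (a signed zero
forcing set of the negative looped pattern `P_s⁻`), then for every `A ∈ Q_s(P_s)` and every
real `λ > 0` the left eigenspace `{ν | νᵀ A = λ νᵀ}` has dimension at most `|Z|`; hence the
maximum geometric multiplicity of a positive eigenvalue over `Q_s(P_s)` is at most the
positive signed zero forcing number. -/
theorem stmt7 {n : ℕ} (P : Fin n → Fin n → SignPatEntry)
    (hP : ∀ i j : Fin n, i ≠ j → P i j ≠ SignPatEntry.unk)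
    (Z : Finset (Fin n)) (hZ : SignedZFS (negLooped P) Z) :
    ∀ A : Matrix (Fin n) (Fin n) ℝ, QClass P A →
      ∀ lam : ℝ, 0 < lam →
        Module.finrank ℝ (leftEigenspace A lam) ≤ Z.card := by
  intro A hA lam hlam
  refine finrank_le_card_of_forall_eq_zero _ Z fun ν hν hνZ => ?_
  exact hZ.eq_zero_of_vecMul_eq_zero (negLooped_ne_unk hP)
    (qClass_negLooped_sub_smul_one hA hlam) (vecMul_sub_smul_one_eq_zero hν) hνZ
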